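/- For every n ≥ 2 with n ≠ 4, the minimum of ν(A) + ν(B) − 2n over all mutually orthogonal pairs (A, B) of n×n normal matrices over R = {0, −1} equals 4n − 6 (in particular this minimum is attained). For n = 4 this minimum equals 8. -/

import Mathlib

/-- A matrix over `R = {0,-1} ⊆ ℤ` is normal: zero diagonal, entries `0` or `-1`. -/
def IsNormal {n : ℕ} (A : Matrix (Fin n) (Fin n) ℤ) : Prop :=
  (∀ i, A i i = 0) ∧ ∀ i j, A i j = 0 ∨ A i j = -1

/-- Tropical (max-plus) matrix product: `(A⊙B) i j = max_k (A i k + B k j)`. -/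
noncomputable def tropMul {n : ℕ} (A B : Matrix (Fin n) (Fin n) ℤ) :
    Matrix (Fin n) (Fin n) ℤ :=
  Matrix.of fun i j => sSup (Set.range fun k => A i k + B k j)

/-- Tropical sum: entrywise maximum. -/
def tropSum {n : ℕ} (A B : Matrix (Fin n) (Fin n) ℤ) : Matrix (Fin n) (Fin n) ℤ :=
  Matrix.of fun i j => max (A i j) (B i j)

/-- `nu A` is the number of zero entries of `A`. -/
def nu {n : ℕ} (A : Matrix (Fin n) (Fin n) ℤ) : ℕ :=
  (Finset.univ.filter (fun p : Fin n × Fin n => A p.1 p.2 = 0)).card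

/-!
Write `R i`, `S i` for the zero positions in row `i` of `A` and `B`, and `a_i`, `b_i` for their
sizes. Orthogonality says that every `j` is reached from every `i` by a step in `R` followed by a
step in `S`, and vice versa. Hence `R i = {i}` forces `S i = univ`, and `R i = {i, e}` forces
`S i ∪ S e = univ`. So a singular row (`a_i = 1` or `b_i = 1`) has `a_i + b_i = n + 1`, and every
row has `a_i + b_i ≥ min 4 (n + 1)`, which settles `n ≤ 4`.

For `n ≥ 5`, suppose there are fewer than `6n - 6` zeros. Then at most one row is singular, and
at most one row has `a_i = b_i = 2`: for two such rows, their partners in `S` are rows of `A`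
containing the complement of `R i`, which puts at least `n - 3` zeros beyond two per row into
`A`, and likewise into `B`. All remaining rows have `a_k + b_k ≥ 5`. With a singular row this is
already too many zeros; otherwise a cheapest row has, say, `R i = {i, e}`, and then `e` carries
the `n - b_i` zeros of `B` missing from row `i`.

The bound `6n - 6` is attained by the zero patterns "diagonal, row `p`, column `q`" for `A` and
the same with `p`, `q` exchanged for `B`; for `n = 4`, the bound `16` is attained by two
partitions into pairs each of whose blocks meets each block of the other.
-/

open Finset

theorem Finset.exists_ne_eq_pair_of_card_eq_two {α : Type*} [DecidableEq α] {s : Finset α}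
    {a : α} (ha : a ∈ s) (hs : #s = 2) : ∃ b ≠ a, s = {a, b} := by
  obtain ⟨x, y, hxy, rfl⟩ := card_eq_two.1 hs
  rcases mem_insert.1 ha with rfl | ha
  · exact ⟨y, hxy.symm, rfl⟩
  · obtain rfl := mem_singleton.1 ha
    exact ⟨x, hxy, pair_comm _ _⟩

section Sums

variable {α : Type*} [Fintype α] [DecidableEq α] {f : α → ℕ} {c : ℕ}

theorem sum_add_card_compl_mul_le_sum (s : Finset α) (h : ∀ k ∉ s, c ≤ f k) :
    ∑ k ∈ s, f k + (Fintype.card α - #s) * c ≤ ∑ k, f k := by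
  rw [← sum_add_sum_compl s f, ← card_compl, ← smul_eq_mul]
  gcongr
  exact card_nsmul_le_sum _ _ _ fun k hk => h k (mem_compl.1 hk)

theorem add_mul_le_sum_of_forall_ne (p : α) (h : ∀ k ≠ p, c ≤ f k) :
    f p + (Fintype.card α - 1) * c ≤ ∑ k, f k := by
  simpa using sum_add_card_compl_mul_le_sum {p} (by simpa using h)

theorem add_add_mul_le_sum_of_forall_ne_ne {p q : α} (hpq : p ≠ q)
    (h : ∀ k, k ≠ p → k ≠ q → c ≤ f k) :
    f p + f q + (Fintype.card α - 2) * c ≤ ∑ k, f k := by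
  have := sum_add_card_compl_mul_le_sum {p, q} (c := c) (f := f) fun k hk => by
    simp only [mem_insert, mem_singleton, not_or] at hk
    exact h k hk.1 hk.2
  rwa [sum_pair hpq, card_pair hpq] at this

end Sums

/-- The zero patterns `R i = {j | A i j = 0}` and `S i = {j | B i j = 0}` of the rows of two
normal matrices with `A ⊙ B = Z = B ⊙ A`. -/
structure IsOrthPair {α : Type*} (R S : α → Finset α) : Prop where
  mem_left (i : α) : i ∈ R i
  mem_right (i : α) : i ∈ S i
  cover_left (i j : α) : ∃ k ∈ R i, j ∈ S k
  cover_right (i j : α) : ∃ k ∈ S i, j ∈ R k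

namespace IsOrthPair

variable {α : Type*} {R S : α → Finset α}

theorem symm (h : IsOrthPair R S) : IsOrthPair S R :=
  ⟨h.mem_right, h.mem_left, h.cover_right, h.cover_left⟩

theorem one_le_card_left (h : IsOrthPair R S) (i : α) : 1 ≤ #(R i) :=
  card_pos.2 ⟨i, h.mem_left i⟩

variable [Fintype α]

theorem eq_univ_of_card_eq_one (h : IsOrthPair R S) {i : α} (hi : #(R i) = 1) : S i = univ := by
  refine eq_univ_of_forall fun j => ?_
  obtain ⟨k, hk, hj⟩ := h.cover_left i j
  rwa [card_le_one.1 hi.le k hk i (h.mem_left i)] at hj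

theorem card_add_card_of_card_eq_one (h : IsOrthPair R S) {i : α}
    (hi : #(R i) = 1 ∨ #(S i) = 1) : #(R i) + #(S i) = Fintype.card α + 1 := by
  rcases hi with hi | hi
  · rw [hi, h.eq_univ_of_card_eq_one hi, card_univ, add_comm]
  · rw [hi, h.symm.eq_univ_of_card_eq_one hi, card_univ]

theorem min_le_card_add_card (h : IsOrthPair R S) (i : α) :
    min 4 (Fintype.card α + 1) ≤ #(R i) + #(S i) := by
  by_cases hi : #(R i) = 1 ∨ #(S i) = 1
  · rw [h.card_add_card_of_card_eq_one hi]
    omega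
  · have := h.one_le_card_left i
    have := h.symm.one_le_card_left i
    omega

theorem card_mul_min_le_sum (h : IsOrthPair R S) :
    Fintype.card α * min 4 (Fintype.card α + 1) ≤ ∑ i, (#(R i) + #(S i)) := by
  simpa using card_nsmul_le_sum univ _ _ fun i _ => h.min_le_card_add_card i

variable [DecidableEq α]

theorem compl_subset_of_eq_pair (h : IsOrthPair R S) {i e : α} (he : R i = {i, e}) :
    (S i)ᶜ ⊆ S e := by
  intro j hj
  obtain ⟨k, hk, hjk⟩ := h.cover_left i j
  rw [he, mem_insert, mem_singleton] at hk
  rcases hk with rfl | rfl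
  · exact absurd hjk (mem_compl.1 hj)
  · exact hjk

theorem card_le_card_add_card_of_eq_pair (h : IsOrthPair R S) {i e : α} (he : R i = {i, e}) :
    Fintype.card α ≤ #(S i) + #(S e) := by
  have := card_le_card (h.compl_subset_of_eq_pair he)
  rw [card_compl] at this
  have := card_le_univ (S i)
  omega

theorem six_mul_sub_six_le_of_ne_of_card_add_card_eq (h : IsOrthPair R S)
    (hn : 3 ≤ Fintype.card α) {i j : α} (hij : i ≠ j) (hi : #(R i) + #(S i) = Fintype.card α + 1)
    (hj : #(R j) + #(S j) = Fintype.card α + 1) :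
    6 * Fintype.card α - 6 ≤ ∑ k, (#(R k) + #(S k)) := by
  have := add_add_mul_le_sum_of_forall_ne_ne (f := fun k => #(R k) + #(S k)) (c := 4) hij
    fun k _ _ => by have := h.min_le_card_add_card k; omega
  omega

/-- Two rows with `a_i = b_i = 2` force one row of `A` with `n - 1` zeros or two rows with
`n - 2` zeros. -/
theorem sub_three_le_sum_card_sub_two (h : IsOrthPair R S) (hn : 5 ≤ Fintype.card α)
    {i₁ i₂ : α} (h12 : i₁ ≠ i₂) (ha₁ : #(R i₁) = 2) (hb₁ : #(S i₁) = 2) (ha₂ : #(R i₂) = 2)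
    (hb₂ : #(S i₂) = 2) :
    Fintype.card α - 3 ≤ ∑ k, (#(R k) - 2) := by
  obtain ⟨f₁, -, hf₁⟩ := exists_ne_eq_pair_of_card_eq_two (h.mem_right i₁) hb₁
  obtain ⟨f₂, -, hf₂⟩ := exists_ne_eq_pair_of_card_eq_two (h.mem_right i₂) hb₂
  have hsub₁ := h.symm.compl_subset_of_eq_pair hf₁
  have hsub₂ := h.symm.compl_subset_of_eq_pair hf₂
  by_cases hf : f₁ = f₂
  · subst hf
    have hne : R i₁ ≠ R i₂ := by
      intro heq
      obtain ⟨e, -, he⟩ := exists_ne_eq_pair_of_card_eq_two (h.mem_left i₁) ha₁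
      have hi₂ : i₂ ∈ R i₁ := heq ▸ h.mem_left i₂
      rw [he, mem_insert, mem_singleton] at hi₂
      rcases hi₂ with hi₂ | rfl
      · exact h12 hi₂.symm
      · have := h.card_le_card_add_card_of_eq_pair he
        omega
    have hinter : #(R i₁ ∩ R i₂) ≤ 1 := by
      by_contra! hgt
      exact hne ((eq_of_subset_of_card_le inter_subset_left (by omega)).symm.trans
        (eq_of_subset_of_card_le inter_subset_right (by omega)))
    have hhub := card_le_card (compl_inter (R i₁) (R i₂) ▸ union_subset hsub₁ hsub₂)
    rw [card_compl] at hhub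
    have := single_le_sum (f := fun k => #(R k) - 2) (fun _ _ => Nat.zero_le _) (mem_univ f₁)
    omega
  · have h₁ := card_le_card hsub₁
    have h₂ := card_le_card hsub₂
    rw [card_compl] at h₁ h₂
    have := sum_le_sum_of_subset (f := fun k => #(R k) - 2) (subset_univ {f₁, f₂})
    rw [sum_pair hf] at this
    omega

theorem sub_three_add_sum_min_le_sum (h : IsOrthPair R S) (hn : 5 ≤ Fintype.card α)
    {i₁ i₂ : α} (h12 : i₁ ≠ i₂) (ha₁ : #(R i₁) = 2) (hb₁ : #(S i₁) = 2) (ha₂ : #(R i₂) = 2)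
    (hb₂ : #(S i₂) = 2) :
    Fintype.card α - 3 + ∑ k, min #(R k) 2 ≤ ∑ k, #(R k) := by
  calc Fintype.card α - 3 + ∑ k, min #(R k) 2 ≤ ∑ k, (#(R k) - 2) + ∑ k, min #(R k) 2 := by
        gcongr
        exact h.sub_three_le_sum_card_sub_two hn h12 ha₁ hb₁ ha₂ hb₂
    _ = ∑ k, #(R k) := by
        rw [← sum_add_distrib]
        exact sum_congr rfl fun k _ => Nat.sub_add_min_cancel _ _

theorem six_mul_sub_six_le_of_card_eq_one (h : IsOrthPair R S) (hn : 5 ≤ Fintype.card α)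
    {i₀ : α} (hi₀ : #(R i₀) = 1) :
    6 * Fintype.card α - 6 ≤ ∑ k, (#(R k) + #(S k)) := by
  by_contra! hT
  have hreg : ∀ k ≠ i₀, 2 ≤ #(R k) ∧ 2 ≤ #(S k) := by
    intro k hk
    by_contra hk₂
    have := h.one_le_card_left k
    have := h.symm.one_le_card_left k
    exact hT.not_ge (h.six_mul_sub_six_le_of_ne_of_card_add_card_eq (by omega) hk
      (h.card_add_card_of_card_eq_one (by omega)) (h.card_add_card_of_card_eq_one (.inl hi₀)))
  have hb₀ : #(S i₀) = Fintype.card α := by rw [h.eq_univ_of_card_eq_one hi₀, card_univ]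
  by_cases hplain : ∃ i₁ i₂, i₁ ≠ i₂ ∧ #(R i₁) = 2 ∧ #(S i₁) = 2 ∧ #(R i₂) = 2 ∧ #(S i₂) = 2
  · obtain ⟨i₁, i₂, h12, ha₁, hb₁, ha₂, hb₂⟩ := hplain
    have hR := h.sub_three_add_sum_min_le_sum hn h12 ha₁ hb₁ ha₂ hb₂
    have hmin := add_mul_le_sum_of_forall_ne (f := fun k => min #(R k) 2) (c := 2) i₀
      fun k hk => by have := (hreg k hk).1; omega
    have hS := add_mul_le_sum_of_forall_ne (f := fun k => #(S k)) (c := 2) i₀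
      fun k hk => (hreg k hk).2
    rw [sum_add_distrib] at hT
    simp only [hi₀, hb₀] at hmin hS
    omega
  · have hP : #{k | #(R k) = 2 ∧ #(S k) = 2} ≤ 1 := card_le_one.2 fun a ha b hb => by
      by_contra hab
      simp only [mem_filter, mem_univ, true_and] at ha hb
      exact hplain ⟨a, b, hab, ha.1, ha.2, hb.1, hb.2⟩
    have := add_mul_le_sum_of_forall_ne (c := 5) i₀
      (f := fun k => #(R k) + #(S k) + if #(R k) = 2 ∧ #(S k) = 2 then 1 else 0)
      fun k hk => by have := hreg k hk; split_ifs <;> omega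
    rw [sum_add_distrib, ← card_filter] at this
    omega

/-- The partner `e` of a row `R i = {i, e}` carries the zeros of `B` missing from row `i`. -/
theorem six_mul_sub_six_le_of_card_eq_two (h : IsOrthPair R S) (hR : ∀ k, 2 ≤ #(R k))
    {i : α} (hi : #(R i) = 2) (h5 : ∀ k ≠ i, 5 ≤ #(R k) + #(S k)) :
    6 * Fintype.card α - 6 ≤ ∑ k, (#(R k) + #(S k)) := by
  obtain ⟨e, hei, he⟩ := exists_ne_eq_pair_of_card_eq_two (h.mem_left i) hi
  have := h.card_le_card_add_card_of_eq_pair he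
  have := add_add_mul_le_sum_of_forall_ne_ne (f := fun k => #(R k) + #(S k)) (c := 5)
    hei.symm fun k hki _ => h5 k hki
  have := hR e
  omega

theorem six_mul_sub_six_le_of_two_le (h : IsOrthPair R S) (hn : 5 ≤ Fintype.card α)
    (hR : ∀ k, 2 ≤ #(R k)) (hS : ∀ k, 2 ≤ #(S k)) :
    6 * Fintype.card α - 6 ≤ ∑ k, (#(R k) + #(S k)) := by
  by_cases hplain : ∃ i₁ i₂, i₁ ≠ i₂ ∧ #(R i₁) = 2 ∧ #(S i₁) = 2 ∧ #(R i₂) = 2 ∧ #(S i₂) = 2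
  · obtain ⟨i₁, i₂, h12, ha₁, hb₁, ha₂, hb₂⟩ := hplain
    have hR' := h.sub_three_add_sum_min_le_sum hn h12 ha₁ hb₁ ha₂ hb₂
    have hS' := h.symm.sub_three_add_sum_min_le_sum hn h12 hb₁ ha₁ hb₂ ha₂
    simp only [min_eq_right (hR _), min_eq_right (hS _), sum_const, card_univ, smul_eq_mul]
      at hR' hS'
    rw [sum_add_distrib]
    omega
  · have : Nonempty α := Fintype.card_pos_iff.1 (by omega)
    obtain ⟨i, hi⟩ := Finite.exists_min fun k => #(R k) + #(S k)
    have h5 : ∀ k ≠ i, 5 ≤ #(R k) + #(S k) := by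
      intro k hk
      by_contra! hk5
      have := hi k
      have := hR i; have := hS i; have := hR k; have := hS k
      exact hplain ⟨k, i, hk, by omega, by omega, by omega, by omega⟩
    by_cases hi6 : 6 ≤ #(R i) + #(S i)
    · have := card_nsmul_le_sum univ (fun k => #(R k) + #(S k)) 6 fun k _ => hi6.trans (hi k)
      simp only [card_univ, smul_eq_mul] at this
      omega
    · have := hR i
      have := hS i
      rcases (by omega : #(R i) = 2 ∨ #(S i) = 2) with h2 | h2
      · exact h.six_mul_sub_six_le_of_card_eq_two hR h2 h5
      · simpa only [add_comm] using h.symm.six_mul_sub_six_le_of_card_eq_two hS h2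
          fun k hk => add_comm #(R k) _ ▸ h5 k hk

theorem six_mul_sub_six_le (h : IsOrthPair R S) (hn : 5 ≤ Fintype.card α) :
    6 * Fintype.card α - 6 ≤ ∑ k, (#(R k) + #(S k)) := by
  by_cases hsing : ∃ i, #(R i) = 1 ∨ #(S i) = 1
  · obtain ⟨i, hi | hi⟩ := hsing
    · exact h.six_mul_sub_six_le_of_card_eq_one hn hi
    · simpa only [add_comm] using h.symm.six_mul_sub_six_le_of_card_eq_one hn hi
  · simp only [not_exists, not_or] at hsing
    refine h.six_mul_sub_six_le_of_two_le hn (fun k => ?_) (fun k => ?_)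
    · have := h.one_le_card_left k; have := (hsing k).1; omega
    · have := h.symm.one_le_card_left k; have := (hsing k).2; omega

theorem six_mul_sub_six_le_of_ne_four (h : IsOrthPair R S) (hn : 2 ≤ Fintype.card α)
    (h4 : Fintype.card α ≠ 4) : 6 * Fintype.card α - 6 ≤ ∑ k, (#(R k) + #(S k)) := by
  rcases le_or_gt 5 (Fintype.card α) with h5 | h5
  · exact h.six_mul_sub_six_le h5
  · have := h.card_mul_min_le_sum
    interval_cases Fintype.card α <;> omega

end IsOrthPair

section Matrices

variable {n : ℕ}

theorem IsNormal.le_zero {A : Matrix (Fin n) (Fin n) ℤ} (hA : IsNormal A) (i j : Fin n) :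
    A i j ≤ 0 := by
  rcases hA.2 i j with h | h <;> omega

theorem tropMul_eq_zero_iff {A B : Matrix (Fin n) (Fin n) ℤ} (hA : ∀ i j, A i j ≤ 0)
    (hB : ∀ i j, B i j ≤ 0) : tropMul A B = 0 ↔ ∀ i j, ∃ k, A i k = 0 ∧ B k j = 0 := by
  rcases isEmpty_or_nonempty (Fin n) with hn | hn
  · exact iff_of_true (Subsingleton.elim _ _) fun i => isEmptyElim i
  have hentry (i j : Fin n) : tropMul A B i j = ⨆ k, (A i k + B k j) := rfl
  simp only [← Matrix.ext_iff, Matrix.zero_apply, hentry]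
  refine forall₂_congr fun i j => ⟨fun h0 => ?_, fun ⟨k, hik, hkj⟩ => ?_⟩
  · obtain ⟨k, hk⟩ := exists_eq_ciSup_of_finite (f := fun k => A i k + B k j)
    have := hA i k
    have := hB k j
    exact ⟨k, by omega, by omega⟩
  · refine le_antisymm (ciSup_le fun k => add_nonpos (hA i k) (hB k j)) ?_
    simpa [hik, hkj] using le_ciSup (Finite.bddAbove_range fun k => A i k + B k j) k

def zeroSet (A : Matrix (Fin n) (Fin n) ℤ) (i : Fin n) : Finset (Fin n) := {j | A i j = 0}

theorem nu_eq_sum_card_zeroSet (A : Matrix (Fin n) (Fin n) ℤ) :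
    nu A = ∑ i, #(zeroSet A i) := by
  rw [nu, card_filter, Fintype.sum_prod_type]
  exact sum_congr rfl fun i _ => (card_filter _ _).symm

theorem isOrthPair_zeroSet {A B : Matrix (Fin n) (Fin n) ℤ} (hA : IsNormal A) (hB : IsNormal B)
    (hAB : tropMul A B = 0) (hBA : tropMul B A = 0) : IsOrthPair (zeroSet A) (zeroSet B) where
  mem_left i := by simp [zeroSet, hA.1 i]
  mem_right i := by simp [zeroSet, hB.1 i]
  cover_left i j := by
    simpa [zeroSet] using (tropMul_eq_zero_iff hA.le_zero hB.le_zero).1 hAB i j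
  cover_right i j := by
    simpa [zeroSet] using (tropMul_eq_zero_iff hB.le_zero hA.le_zero).1 hBA i j

def crossMatrix (p q : Fin n) : Matrix (Fin n) (Fin n) ℤ :=
  Matrix.of fun i j => if i = j ∨ i = p ∨ j = q then 0 else -1

theorem isNormal_crossMatrix (p q : Fin n) : IsNormal (crossMatrix p q) :=
  ⟨fun i => by simp [crossMatrix], fun i j => by
    simp only [crossMatrix, Matrix.of_apply]
    split_ifs <;> simp⟩

theorem tropMul_crossMatrix (p q : Fin n) : tropMul (crossMatrix p q) (crossMatrix q p) = 0 :=
  (tropMul_eq_zero_iff (isNormal_crossMatrix p q).le_zero (isNormal_crossMatrix q p).le_zero).2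
    fun i j => ⟨q, by simp [crossMatrix]⟩

theorem nu_crossMatrix {p q : Fin n} (hpq : p ≠ q) : nu (crossMatrix p q) = 3 * n - 3 := by
  have hrow (i : Fin n) : #(zeroSet (crossMatrix p q) i) + (if i = q then 1 else 0) =
      2 + if i = p then n - 2 else 0 := by
    by_cases hip : i = p
    · subst hip
      have hfull : zeroSet (crossMatrix i q) i = univ := by ext j; simp [zeroSet, crossMatrix]
      have : i.val ≠ q.val := Fin.val_ne_of_ne hpq
      have := q.isLt
      rw [hfull, card_univ, Fintype.card_fin, if_neg hpq, if_pos rfl]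
      omega
    · have hpair : zeroSet (crossMatrix p q) i = {i, q} := by
        ext j
        simp only [zeroSet, crossMatrix, mem_filter, mem_univ, true_and, Matrix.of_apply,
          mem_insert, mem_singleton, hip, false_or]
        split_ifs with h <;> grind
      rw [hpair, if_neg hip]
      by_cases hiq : i = q
      · simp [hiq]
      · simp [card_pair hiq, hiq]
  have := congrArg (fun f => ∑ i, f i) (funext hrow)
  simp only [sum_add_distrib, sum_ite_eq', mem_univ, if_true, sum_const, card_univ,
    Fintype.card_fin, smul_eq_mul] at this
  rw [nu_eq_sum_card_zeroSet]
  omega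

theorem exists_orthogonal_nu_add_nu_eq (hn : 2 ≤ n) :
    ∃ A B : Matrix (Fin n) (Fin n) ℤ, IsNormal A ∧ IsNormal B ∧
      tropMul A B = 0 ∧ tropMul B A = 0 ∧ nu A + nu B = 6 * n - 6 := by
  let p : Fin n := ⟨0, by omega⟩
  let q : Fin n := ⟨1, by omega⟩
  have hpq : p ≠ q := by simp [p, q, Fin.ext_iff]
  refine ⟨crossMatrix p q, crossMatrix q p, isNormal_crossMatrix p q, isNormal_crossMatrix q p,
    tropMul_crossMatrix p q, tropMul_crossMatrix q p, ?_⟩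
  rw [nu_crossMatrix hpq, nu_crossMatrix hpq.symm]
  omega

theorem exists_orthogonal_nu_add_nu_eq_sixteen :
    ∃ A B : Matrix (Fin 4) (Fin 4) ℤ, IsNormal A ∧ IsNormal B ∧
      tropMul A B = 0 ∧ tropMul B A = 0 ∧ nu A + nu B = 16 := by
  let A : Matrix (Fin 4) (Fin 4) ℤ :=
    Matrix.of fun i j => if (i.val % 3 = 0 ↔ j.val % 3 = 0) then 0 else -1
  let B : Matrix (Fin 4) (Fin 4) ℤ := Matrix.of fun i j => if i.val % 2 = j.val % 2 then 0 else -1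
  have hA : IsNormal A := by simp only [IsNormal, A, Matrix.of_apply]; decide
  have hB : IsNormal B := by simp only [IsNormal, B, Matrix.of_apply]; decide
  refine ⟨A, B, hA, hB, ?_, ?_, by decide⟩
  · rw [tropMul_eq_zero_iff hA.le_zero hB.le_zero]
    simp only [A, B, Matrix.of_apply]
    decide
  · rw [tropMul_eq_zero_iff hB.le_zero hA.le_zero]
    simp only [A, B, Matrix.of_apply]
    decide

end Matrices

theorem stmt_11 (n : ℕ) (hn : 2 ≤ n) :
    (n ≠ 4 →
      (∃ A B : Matrix (Fin n) (Fin n) ℤ, IsNormal A ∧ IsNormal B ∧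
        tropMul A B = 0 ∧ tropMul B A = 0 ∧ nu A + nu B = 4 * n - 6 + 2 * n) ∧
      (∀ A B : Matrix (Fin n) (Fin n) ℤ, IsNormal A → IsNormal B →
        tropMul A B = 0 → tropMul B A = 0 → 4 * n - 6 + 2 * n ≤ nu A + nu B)) ∧
    (n = 4 →
      (∃ A B : Matrix (Fin n) (Fin n) ℤ, IsNormal A ∧ IsNormal B ∧
        tropMul A B = 0 ∧ tropMul B A = 0 ∧ nu A + nu B = 8 + 2 * n) ∧
      (∀ A B : Matrix (Fin n) (Fin n) ℤ, IsNormal A → IsNormal B →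
        tropMul A B = 0 → tropMul B A = 0 → 8 + 2 * n ≤ nu A + nu B)) := by
  refine ⟨fun h4 => ⟨?_, fun A B hA hB hAB hBA => ?_⟩,
    fun h4 => ⟨?_, fun A B hA hB hAB hBA => ?_⟩⟩
  · obtain ⟨A, B, hA, hB, hAB, hBA, hnu⟩ := exists_orthogonal_nu_add_nu_eq hn
    exact ⟨A, B, hA, hB, hAB, hBA, by omega⟩
  · have := (isOrthPair_zeroSet hA hB hAB hBA).six_mul_sub_six_le_of_ne_four
      (by simpa using hn) (by simpa using h4)
    rw [nu_eq_sum_card_zeroSet, nu_eq_sum_card_zeroSet, ← sum_add_distrib]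
    simp only [Fintype.card_fin] at this
    omega
  · subst h4
    exact exists_orthogonal_nu_add_nu_eq_sixteen
  · subst h4
    have := (isOrthPair_zeroSet hA hB hAB hBA).card_mul_min_le_sum
    rw [nu_eq_sum_card_zeroSet, nu_eq_sum_card_zeroSet, ← sum_add_distrib]
    simp only [Fintype.card_fin] at this
    omega
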